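/- Strong duality fails for the counterexample game: with P* = sup{ xᵀA y : x, y ∈ Δ₂, xᵀB y ≤ 1/2 } and D* = inf_{λ ≥ 0} sup_{x, y ∈ Δ₂} [ xᵀA y + λ(1/2 − xᵀB y) ], one has P* = 9/2 − √2 < 7/2 = D*; in particular P* < D*, so there exists a constrained Markov potential game for which the Lagrangian primal and dual values differ. -/
import Mathlib


/-- The probability simplex in ℝ². -/
def simplex2 : Set (ℝ × ℝ) := {x | 0 ≤ x.1 ∧ 0 ≤ x.2 ∧ x.1 + x.2 = 1}

/-- Payoff `xᵀ A y` for `A = [[3,2],[2,4]]`. -/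
def pay (x y : ℝ × ℝ) : ℝ := 3 * x.1 * y.1 + 2 * x.1 * y.2 + 2 * x.2 * y.1 + 4 * x.2 * y.2

/-- Constraint value `xᵀ B y` for `B = [[0,0],[0,1]]`. -/
def con (x y : ℝ × ℝ) : ℝ := x.2 * y.2

/-- The primal value of the counterexample game. -/
noncomputable def primalValue : ℝ :=
  sSup {v : ℝ | ∃ x y : ℝ × ℝ, x ∈ simplex2 ∧ y ∈ simplex2 ∧
    con x y ≤ 1 / 2 ∧ v = pay x y}

/-- The dual function of the counterexample game. -/
noncomputable def dualFn (lam : ℝ) : ℝ :=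
  sSup {v : ℝ | ∃ x y : ℝ × ℝ, x ∈ simplex2 ∧ y ∈ simplex2 ∧
    v = pay x y + lam * (1 / 2 - con x y)}

/-- The dual value of the counterexample game. -/
noncomputable def dualValue : ℝ :=
  sInf {v : ℝ | ∃ lam : ℝ, 0 ≤ lam ∧ v = dualFn lam}

lemma sqrt2_sq : (Real.sqrt 2) ^ 2 = 2 := Real.sq_sqrt (by norm_num)

lemma sqrt2_gt_one : (1 : ℝ) < Real.sqrt 2 := by
  nlinarith [sqrt2_sq, Real.sqrt_nonneg 2]

lemma sqrt2_ge_43 : (4 / 3 : ℝ) ≤ Real.sqrt 2 := by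
  nlinarith [sqrt2_sq, Real.sqrt_nonneg 2]

lemma sqrt2_le_two : Real.sqrt 2 ≤ 2 := by
  nlinarith [sqrt2_sq, Real.sqrt_nonneg 2]

lemma primal_ub {x y : ℝ × ℝ} (hx : x ∈ simplex2) (hy : y ∈ simplex2)
    (hc : con x y ≤ 1 / 2) : pay x y ≤ 9 / 2 - Real.sqrt 2 := by
  obtain ⟨hx1, hx2, hxs⟩ := hx
  obtain ⟨hy1, hy2, hys⟩ := hy
  have hs2 := sqrt2_sq
  have h43 := sqrt2_ge_43
  unfold con at hc
  unfold pay
  rcases le_or_gt (x.2 + y.2) (Real.sqrt 2) with h | h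
  · nlinarith [sq_nonneg (x.2 - y.2),
      mul_nonneg (sub_nonneg.2 h)
        (by nlinarith : (0:ℝ) ≤ x.2 + y.2 + Real.sqrt 2 - 4 / 3)]
  · nlinarith

lemma primal_mem :
    (9 / 2 - Real.sqrt 2) ∈ {v : ℝ | ∃ x y : ℝ × ℝ, x ∈ simplex2 ∧ y ∈ simplex2 ∧
      con x y ≤ 1 / 2 ∧ v = pay x y} := by
  refine ⟨(1 - Real.sqrt 2 / 2, Real.sqrt 2 / 2), (1 - Real.sqrt 2 / 2, Real.sqrt 2 / 2),
    ⟨?_, ?_, by ring⟩, ⟨?_, ?_, by ring⟩, ?_, ?_⟩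
  · nlinarith [sqrt2_le_two]
  · nlinarith [Real.sqrt_nonneg 2]
  · nlinarith [sqrt2_le_two]
  · nlinarith [Real.sqrt_nonneg 2]
  · unfold con; dsimp only; nlinarith [sqrt2_sq]
  · unfold pay; dsimp only; nlinarith [sqrt2_sq]

lemma primal_eq : primalValue = 9 / 2 - Real.sqrt 2 := by
  unfold primalValue
  refine le_antisymm (csSup_le ⟨_, primal_mem⟩ ?_) (le_csSup ⟨9 / 2 - Real.sqrt 2, ?_⟩ primal_mem)
  · rintro v ⟨x, y, hx, hy, hc, rfl⟩
    exact primal_ub hx hy hc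
  · rintro v ⟨x, y, hx, hy, hc, rfl⟩
    exact primal_ub hx hy hc

lemma dual_set_bdd {lam : ℝ} (hl : 0 ≤ lam) :
    ∀ v ∈ {v : ℝ | ∃ x y : ℝ × ℝ, x ∈ simplex2 ∧ y ∈ simplex2 ∧
      v = pay x y + lam * (1 / 2 - con x y)}, v ≤ 4 + lam / 2 := by
  rintro v ⟨x, y, ⟨hx1, hx2, hxs⟩, ⟨hy1, hy2, hys⟩, rfl⟩
  unfold pay con
  nlinarith [mul_nonneg hx2 hy2, mul_nonneg hl (mul_nonneg hx2 hy2),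
    mul_nonneg hx1 hy1, mul_nonneg hx1 hy2, mul_nonneg hx2 hy1]

lemma dualFn_ge {lam : ℝ} (hl : 0 ≤ lam) : 7 / 2 ≤ dualFn lam := by
  unfold dualFn
  have hbdd : BddAbove {v : ℝ | ∃ x y : ℝ × ℝ, x ∈ simplex2 ∧ y ∈ simplex2 ∧
      v = pay x y + lam * (1 / 2 - con x y)} := ⟨4 + lam / 2, dual_set_bdd hl⟩
  rcases le_total lam 1 with h | h
  · have hmem : (4 - lam / 2) ∈ {v : ℝ | ∃ x y : ℝ × ℝ, x ∈ simplex2 ∧ y ∈ simplex2 ∧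
        v = pay x y + lam * (1 / 2 - con x y)} := by
      refine ⟨(0, 1), (0, 1), ⟨le_refl _, zero_le_one, by ring⟩,
        ⟨le_refl _, zero_le_one, by ring⟩, ?_⟩
      unfold pay con; ring
    have := le_csSup hbdd hmem
    linarith
  · have hmem : (3 + lam / 2) ∈ {v : ℝ | ∃ x y : ℝ × ℝ, x ∈ simplex2 ∧ y ∈ simplex2 ∧
        v = pay x y + lam * (1 / 2 - con x y)} := by
      refine ⟨(1, 0), (1, 0), ⟨zero_le_one, le_refl _, by ring⟩,
        ⟨zero_le_one, le_refl _, by ring⟩, ?_⟩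
      unfold pay con; ring
    have := le_csSup hbdd hmem
    linarith

lemma dualFn_one : dualFn 1 = 7 / 2 := by
  refine le_antisymm ?_ (dualFn_ge zero_le_one)
  unfold dualFn
  refine csSup_le ⟨3 + (1:ℝ)/2, (1, 0), (1, 0), ⟨zero_le_one, le_refl _, by ring⟩,
    ⟨zero_le_one, le_refl _, by ring⟩, by unfold pay con; ring⟩ ?_
  rintro v ⟨x, y, ⟨hx1, hx2, hxs⟩, ⟨hy1, hy2, hys⟩, rfl⟩
  unfold pay con
  nlinarith [mul_nonneg hx2 hy1, mul_nonneg hx1 hy2]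

lemma dual_eq : dualValue = 7 / 2 := by
  unfold dualValue
  have hmem : (7 / 2 : ℝ) ∈ {v : ℝ | ∃ lam : ℝ, 0 ≤ lam ∧ v = dualFn lam} :=
    ⟨1, zero_le_one, dualFn_one.symm⟩
  have hlb : ∀ v ∈ {v : ℝ | ∃ lam : ℝ, 0 ≤ lam ∧ v = dualFn lam}, (7 / 2 : ℝ) ≤ v := by
    rintro v ⟨lam, hl, rfl⟩
    exact dualFn_ge hl
  exact le_antisymm (csInf_le ⟨7 / 2, hlb⟩ hmem) (le_csInf ⟨_, hmem⟩ hlb)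

/-- Strong duality fails for the counterexample game:
`P* = 9/2 − √2 < 7/2 = D*`; in particular `P* < D*`. -/
theorem strong_duality_fails_counterexample :
    primalValue = 9 / 2 - Real.sqrt 2 ∧
    dualValue = 7 / 2 ∧
    (9 / 2 - Real.sqrt 2 : ℝ) < 7 / 2 ∧
    primalValue < dualValue := by
  refine ⟨primal_eq, dual_eq, by linarith [sqrt2_gt_one], ?_⟩
  rw [primal_eq, dual_eq]
  linarith [sqrt2_gt_one]
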